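/- arXiv:0804.2596 — 3 statements merged into one kernel-verified Lean document; each statement's English description precedes it below -/
import Mathlib

section
/- Let q ≥ 1, let w₁,…,w_q be non-negative integers with Σ_{i=1}^q w_i ≥ 1, and let δ ∈ ℕ. Let h : ℝ^q → ℝ be a C^∞ function which is quasihomogeneous of degree δ for the weights w, i.e. h(s^{w₁}x₁,…,s^{w_q}x_q) = s^δ·h(x) for all s ∈ (0,1] and all x ∈ ℝ^q. Then for every C^∞ function f : ℝ^q → ℝ there exists a C^∞ vector field Y : ℝ^q → ℝ^q such that Σ_{i=1}^q ∂(h·Y_i)/∂x_i (x) = h(x)·f(x) for all x ∈ ℝ^q. -/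
/-!
Write `E = ∑ wᵢ xᵢ ∂ᵢ` for the weighted Euler field and `m = δ + ∑ wᵢ ≥ 1`. Differentiating the
quasihomogeneity relation along the weighted dilations `x ↦ (s^{wᵢ} xᵢ)` at `s = 1` gives
`E h = δ h`. The radial integral `G x = ∫₀¹ s^{m-1} f(s^w x) ds` is smooth and, after the
substitution `r = t s`, satisfies `t^m G(t^w x) = ∫₀ᵗ r^{m-1} f(r^w x) dr`; differentiating at
`t = 1` gives `E G + m G = f`. For `Y = G · (wᵢ xᵢ)ᵢ` one has
`div (h Y) = E (h G) + (∑ wᵢ) h G = h (E G + m G) = h f`.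
-/

open MeasureTheory Set
open scoped ContDiff

section ParametricIntegral

variable {E F : Type*} [NormedAddCommGroup E] [NormedSpace ℝ E]
  [NormedAddCommGroup F] [NormedSpace ℝ F] {a b : ℝ}

theorem hasFDerivAt_intervalIntegral_of_contDiff [ProperSpace E] {φ : ℝ × E → F}
    (hφ : ContDiff ℝ 1 φ) (x₀ : E) :
    HasFDerivAt (fun x => ∫ s in a..b, φ (s, x))
      (∫ s in a..b, (fderiv ℝ φ (s, x₀)).comp (.inr ℝ ℝ E)) x₀ := by
  have hφ' : Continuous fun p => (fderiv ℝ φ p).comp (.inr ℝ ℝ E) :=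
    (hφ.continuous_fderiv one_ne_zero).clm_comp continuous_const
  obtain ⟨C, hC⟩ :=
    (isCompact_uIcc.prod (isCompact_closedBall x₀ 1)).exists_bound_of_continuousOn hφ'.continuousOn
  have hslice : ∀ s x,
      HasFDerivAt (fun y => φ (s, y)) ((fderiv ℝ φ (s, x)).comp (.inr ℝ ℝ E)) x :=
    fun s x => ((hφ.differentiable one_ne_zero (s, x)).hasFDerivAt).comp x
      ((hasFDerivAt_const s x).prodMk (hasFDerivAt_id x))
  refine intervalIntegral.hasFDerivAt_integral_of_dominated_of_fderiv_le
    (𝕜 := ℝ) (μ := volume) (F' := fun x s => (fderiv ℝ φ (s, x)).comp (.inr ℝ ℝ E))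
    (bound := fun _ => C) (Metric.ball_mem_nhds x₀ one_pos) ?_ ?_ ?_ ?_ intervalIntegrable_const ?_
  · exact .of_forall fun x =>
      (hφ.continuous.comp (continuous_id.prodMk continuous_const)).aestronglyMeasurable
  · exact (hφ.continuous.comp (continuous_id.prodMk continuous_const)).intervalIntegrable a b
  · exact (hφ'.comp (continuous_id.prodMk continuous_const)).aestronglyMeasurable
  · exact .of_forall fun s hs x hx =>
      hC (s, x) ⟨uIoc_subset_uIcc hs, Metric.ball_subset_closedBall hx⟩
  · exact .of_forall fun s _ x _ => hslice s x

theorem contDiff_intervalIntegral_of_contDiff [FiniteDimensional ℝ E] {φ : ℝ × E → F}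
    (hφ : ContDiff ℝ ∞ φ) : ContDiff ℝ ∞ (fun x => ∫ s in a..b, φ (s, x)) := by
  refine contDiff_infty.mpr fun n => ?_
  induction n generalizing φ with
  | zero =>
    exact contDiff_zero.mpr (continuous_iff_continuousAt.mpr fun x =>
      (hasFDerivAt_intervalIntegral_of_contDiff (hφ.of_le (by simp)) x).continuousAt)
  | succ n ih =>
    have hderiv := fun x => hasFDerivAt_intervalIntegral_of_contDiff (a := a) (b := b)
      (hφ.of_le (by simp)) x
    rw [Nat.cast_succ, contDiff_succ_iff_fderiv_apply]
    refine ⟨fun x => (hderiv x).differentiableAt, fun h => by simp at h, fun y => ?_⟩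
    have hint : ∀ x,
        IntervalIntegrable (fun s => (fderiv ℝ φ (s, x)).comp (.inr ℝ ℝ E)) volume a b :=
      fun x => (((hφ.continuous_fderiv (by simp)).clm_comp continuous_const).comp
        (continuous_id.prodMk continuous_const)).intervalIntegrable a b
    simp only [(hderiv _).fderiv, ContinuousLinearMap.intervalIntegral_apply (hint _)]
    exact ih ((hφ.fderiv_right le_rfl).clm_apply contDiff_const)

end ParametricIntegral

section WeightedScaling

variable {ι : Type*} (w : ι → ℕ)

def weightedScale (s : ℝ) (x : ι → ℝ) : ι → ℝ := fun i => s ^ w i * x i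

def eulerField (x : ι → ℝ) : ι → ℝ := fun i => (w i : ℝ) * x i

def IsQuasihomogeneous (δ : ℕ) (h : (ι → ℝ) → ℝ) : Prop :=
  ∀ s : ℝ, 0 < s → ∀ x, h (weightedScale w s x) = s ^ δ * h x

variable {w}

@[simp]
theorem weightedScale_one (x : ι → ℝ) : weightedScale w 1 x = x := by
  ext i; simp [weightedScale]

theorem weightedScale_mul (s t : ℝ) (x : ι → ℝ) :
    weightedScale w (s * t) x = weightedScale w s (weightedScale w t x) := by
  ext i; simp only [weightedScale, mul_pow, mul_assoc]

theorem hasDerivAt_weightedScale_one (x : ι → ℝ) :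
    HasDerivAt (fun s => weightedScale w s x) (eulerField w x) 1 :=
  hasDerivAt_pi.mpr fun i => by
    simpa [weightedScale, eulerField] using (hasDerivAt_pow (w i) (1 : ℝ)).mul_const (x i)

theorem IsQuasihomogeneous.of_Ioc {δ : ℕ} {h : (ι → ℝ) → ℝ}
    (hqh : ∀ s ∈ Ioc (0 : ℝ) 1, ∀ x, h (weightedScale w s x) = s ^ δ * h x) :
    IsQuasihomogeneous w δ h := by
  intro s hs x
  rcases le_total s 1 with hs1 | hs1
  · exact hqh s ⟨hs, hs1⟩ x
  · have hinv := hqh s⁻¹ ⟨inv_pos.mpr hs, inv_le_one_of_one_le₀ hs1⟩ (weightedScale w s x)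
    rw [← weightedScale_mul, inv_mul_cancel₀ hs.ne', weightedScale_one] at hinv
    rw [hinv, ← mul_assoc, ← mul_pow, mul_inv_cancel₀ hs.ne', one_pow, one_mul]

variable [Fintype ι]

theorem contDiff_weightedScale : ContDiff ℝ ∞ fun p : ℝ × (ι → ℝ) => weightedScale w p.1 p.2 :=
  contDiff_pi.mpr fun i => (contDiff_fst.pow _).mul ((contDiff_apply ℝ ℝ i).comp contDiff_snd)

theorem contDiff_eulerField : ContDiff ℝ ∞ (eulerField w) :=
  contDiff_pi.mpr fun i => contDiff_const.mul (contDiff_apply ℝ ℝ i)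

theorem hasDerivAt_comp_weightedScale_one {F : (ι → ℝ) → ℝ} {x : ι → ℝ}
    (hF : DifferentiableAt ℝ F x) :
    HasDerivAt (fun s => F (weightedScale w s x)) (fderiv ℝ F x (eulerField w x)) 1 := by
  have hF' : HasFDerivAt F (fderiv ℝ F x) (weightedScale w 1 x) := by
    simpa using hF.hasFDerivAt
  exact hF'.comp_hasDerivAt 1 (hasDerivAt_weightedScale_one x)

theorem IsQuasihomogeneous.fderiv_eulerField {δ : ℕ} {h : (ι → ℝ) → ℝ}
    (hqh : IsQuasihomogeneous w δ h) {x : ι → ℝ} (hh : DifferentiableAt ℝ h x) :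
    fderiv ℝ h x (eulerField w x) = δ * h x := by
  have hpow : HasDerivAt (fun s => s ^ δ * h x) (δ * h x) 1 := by
    simpa using (hasDerivAt_pow δ (1 : ℝ)).mul_const (h x)
  refine (hasDerivAt_comp_weightedScale_one hh).unique (hpow.congr_of_eventuallyEq ?_)
  filter_upwards [Ioi_mem_nhds one_pos] with s hs using hqh s hs x

end WeightedScaling

section RadialIntegral

variable {ι : Type*} (w : ι → ℕ) (n : ℕ) (f : (ι → ℝ) → ℝ)

noncomputable def radialIntegral (x : ι → ℝ) : ℝ :=
  ∫ s in (0 : ℝ)..1, s ^ n * f (weightedScale w s x)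

variable {w n f}

theorem pow_succ_mul_radialIntegral_weightedScale (t : ℝ) (x : ι → ℝ) :
    t ^ (n + 1) * radialIntegral w n f (weightedScale w t x)
      = ∫ r in (0 : ℝ)..t, r ^ n * f (weightedScale w r x) := by
  have h := intervalIntegral.mul_integral_comp_mul_left (a := 0) (b := 1)
    (f := fun r => r ^ n * f (weightedScale w r x)) t
  simp only [mul_zero, mul_one] at h
  rw [← h, radialIntegral, pow_succ', mul_assoc, ← intervalIntegral.integral_const_mul]
  congr 1
  refine intervalIntegral.integral_congr fun s _ => ?_
  simp only [← weightedScale_mul, mul_comm s t, mul_pow]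
  ring

variable [Fintype ι]

theorem contDiff_radialIntegral (hf : ContDiff ℝ ∞ f) : ContDiff ℝ ∞ (radialIntegral w n f) :=
  contDiff_intervalIntegral_of_contDiff
    ((contDiff_fst.pow n).mul (hf.comp contDiff_weightedScale))

theorem fderiv_radialIntegral_eulerField (hf : Continuous f) {x : ι → ℝ}
    (hR : DifferentiableAt ℝ (radialIntegral w n f) x) :
    fderiv ℝ (radialIntegral w n f) x (eulerField w x) + (n + 1) * radialIntegral w n f x
      = f x := by
  have hlhs : HasDerivAt (fun t => t ^ (n + 1) * radialIntegral w n f (weightedScale w t x))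
      (fderiv ℝ (radialIntegral w n f) x (eulerField w x) + (n + 1) * radialIntegral w n f x)
      1 := by
    refine ((hasDerivAt_pow (n + 1) (1 : ℝ)).fun_mul
      (hasDerivAt_comp_weightedScale_one hR)).congr_deriv ?_
    simp only [one_pow, one_mul, mul_one, weightedScale_one, Nat.cast_add, Nat.cast_one]
    ring
  have hcont : Continuous fun r => r ^ n * f (weightedScale w r x) :=
    (continuous_pow n).mul (hf.comp (contDiff_weightedScale.continuous.comp
      (continuous_id.prodMk continuous_const)))
  have hrhs := intervalIntegral.integral_hasDerivAt_right (hcont.intervalIntegrable 0 1)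
    (hcont.stronglyMeasurableAtFilter _ _) hcont.continuousAt
  rw [funext fun t => pow_succ_mul_radialIntegral_weightedScale t x] at hlhs
  simpa using hlhs.unique hrhs

end RadialIntegral

section Divergence

variable {ι : Type*} [Fintype ι] [DecidableEq ι]

noncomputable def divergence (Z : (ι → ℝ) → ι → ℝ) (x : ι → ℝ) : ℝ :=
  ∑ i, fderiv ℝ (fun y => Z y i) x (Pi.single i 1)

theorem divergence_smul_eulerField (w : ι → ℕ) {P : (ι → ℝ) → ℝ} {x : ι → ℝ}
    (hP : DifferentiableAt ℝ P x) :
    divergence (fun y => P y • eulerField w y) x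
      = fderiv ℝ P x (eulerField w x) + (∑ i, (w i : ℝ)) * P x := by
  have hterm : ∀ i, fderiv ℝ (fun y => P y * eulerField w y i) x (Pi.single i 1)
      = fderiv ℝ P x (eulerField w x i • Pi.single i 1) + w i * P x := by
    intro i
    have hcoord : HasFDerivAt (fun y : ι → ℝ => eulerField w y i)
        ((w i : ℝ) • ContinuousLinearMap.proj i) x :=
      ((ContinuousLinearMap.proj (R := ℝ) (φ := fun _ : ι => ℝ) i).hasFDerivAt).const_mul _
    rw [(hP.hasFDerivAt.fun_mul hcoord).fderiv]
    simp only [add_apply, smul_apply, ContinuousLinearMap.proj_apply, Pi.single_eq_same,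
      smul_eq_mul, mul_one, map_smul, eulerField]
    ring
  simp only [divergence, Pi.smul_apply, smul_eq_mul, hterm, Finset.sum_add_distrib, ← map_sum,
    Finset.sum_mul]
  congr 2
  ext j
  simp [Finset.sum_apply, Pi.single_apply]

end Divergence

open Finset in
theorem wqh_relative_poincare_general
    (q : ℕ) (w : Fin q → ℕ) (hw : 1 ≤ ∑ i, w i) (δ : ℕ)
    (h : (Fin q → ℝ) → ℝ) (hh : ContDiff ℝ (⊤ : ℕ∞) h)
    (hqh : ∀ s ∈ Set.Ioc (0:ℝ) 1, ∀ x : Fin q → ℝ,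
      h (fun i => s ^ (w i) * x i) = s ^ δ * h x)
    (f : (Fin q → ℝ) → ℝ) (hf : ContDiff ℝ (⊤ : ℕ∞) f) :
    ∃ Y : (Fin q → ℝ) → (Fin q → ℝ), ContDiff ℝ (⊤ : ℕ∞) Y ∧
      ∀ x : Fin q → ℝ,
        (∑ i, fderiv ℝ (fun y => h y * Y y i) x (Pi.single i 1)) = h x * f x := by
  obtain ⟨n, hn⟩ : ∃ n : ℕ, δ + ∑ i, w i = n + 1 := ⟨δ + ∑ i, w i - 1, by omega⟩
  set G := radialIntegral w n f
  have hG : ContDiff ℝ ∞ G := contDiff_radialIntegral hf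
  have hhd := hh.differentiable (by simp)
  have hGd := hG.differentiable (by simp)
  refine ⟨fun y => G y • eulerField w y, hG.smul contDiff_eulerField, fun x => ?_⟩
  have hEuler := (IsQuasihomogeneous.of_Ioc hqh).fderiv_eulerField (hhd x)
  have hG_euler := fderiv_radialIntegral_eulerField hf.continuous (hGd x)
  calc ∑ i, fderiv ℝ (fun y => h y * (G y • eulerField w y) i) x (Pi.single i 1)
      = divergence (fun y => (h y * G y) • eulerField w y) x := by
        simp only [divergence, Pi.smul_apply, smul_eq_mul, mul_assoc]
    _ = h x * fderiv ℝ G x (eulerField w x) + G x * fderiv ℝ h x (eulerField w x)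
          + (∑ i, (w i : ℝ)) * (h x * G x) := by
        rw [divergence_smul_eulerField w ((hhd x).fun_mul (hGd x)),
          fderiv_fun_mul (hhd x) (hGd x)]
        simp only [add_apply, smul_apply, smul_eq_mul]
    _ = h x * f x := by
        have hcast : (δ : ℝ) + ∑ i, (w i : ℝ) = n + 1 := by exact_mod_cast hn
        linear_combination h x * hG_euler + h x * G x * hcast + G x * hEuler

open Finset in
/-- Lemma 4.5 (rP) in divergence form: if `h` is quasihomogeneous of degree `δ` for non-negative
weights `w` with positive total weight, then for every smooth `f` there is a smooth vector field
`Y` with `div (h·Y) = h·f`. -/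
theorem wqh_relative_poincare
    (q : ℕ) (hq : 1 ≤ q) (w : Fin q → ℕ) (hw : 1 ≤ ∑ i, w i) (δ : ℕ)
    (h : (Fin q → ℝ) → ℝ) (hh : ContDiff ℝ (⊤ : ℕ∞) h)
    (hqh : ∀ s ∈ Set.Ioc (0:ℝ) 1, ∀ x : Fin q → ℝ,
      h (fun i => s ^ (w i) * x i) = s ^ δ * h x)
    (f : (Fin q → ℝ) → ℝ) (hf : ContDiff ℝ (⊤ : ℕ∞) f) :
    ∃ Y : (Fin q → ℝ) → (Fin q → ℝ), ContDiff ℝ (⊤ : ℕ∞) Y ∧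
      ∀ x : Fin q → ℝ,
        (∑ i, fderiv ℝ (fun y => h y * Y y i) x (Pi.single i 1)) = h x * f x :=
  wqh_relative_poincare_general q w hw δ h hh hqh f hf
end

section
/- Let K be a field of characteristic zero, let I ⊆ K[x₁,…,x_n] be an ideal, and let g₁,…,g_s ∈ I be polynomials such that each g_i is quasihomogeneous for some non-negative integer weights w^{(i)} ∈ ℕ^n with Σ_{j=1}^n w^{(i)}_j ≥ 1 and some degree δ_i ∈ ℕ, i.e. Σ_{j=1}^n w^{(i)}_j·x_j·∂g_i/∂x_j = δ_i·g_i. Let D = { Σ_{j=1}^n ∂X_j/∂x_j : X ∈ K[x₁,…,x_n]^n with Σ_j X_j·∂h/∂x_j ∈ I for all h ∈ I } be the K-subspace of divergences of vector fields in Derlog(I), and let J ⊆ K[x₁,…,x_n] be the ideal generated by all partial derivatives ∂g_i/∂x_j (1 ≤ i ≤ s, 1 ≤ j ≤ n). Then dim_K K[x₁,…,x_n]/D ≤ dim_K K[x₁,…,x_n]/J. -/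
/-!
Every partial derivative `∂_j g_i` lies in `D`, and so does every multiple `p ∂_j g_i`; hence
`J ≤ D` and `K[x]/D` is a quotient of `K[x]/J`. Writing `p ∂_j g = ∂_j (p g) - (∂_j p) g`, the
first term is the divergence of the field `p g ∂_j`, which maps `I` into `I` because `g ∈ I`.
For the second, take the weighted Euler field `E = ∑ w_j x_j ∂_j` of `g`: when `q` is weighted
homogeneous of degree `d`, `div(q g E) = (|w| + d + δ) q g`, and `|w| ≥ 1` makes this coefficient
invertible in characteristic zero.
-/

lemma Ideal.restrictScalars_span_le {K A : Type*} [CommSemiring K] [CommSemiring A] [Algebra K A]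
    {S : Set A} {N : Submodule K A} (hS : ∀ a, ∀ s ∈ S, a * s ∈ N) :
    (Ideal.span S).restrictScalars K ≤ N := by
  intro x hx
  suffices ∀ a, a * x ∈ N by simpa using this 1
  induction hx using Submodule.span_induction with
  | mem s hs => exact fun a ↦ hS a s hs
  | zero => simp
  | add x y _ _ hx hy => intro a; rw [mul_add]; exact add_mem (hx a) (hy a)
  | smul b x _ hx => intro a; rw [smul_eq_mul, ← mul_assoc]; exact hx (a * b)

namespace MvPolynomial

variable {σ R : Type*} [Fintype σ] [CommSemiring R]

noncomputable def divergence (Y : σ → MvPolynomial σ R) : MvPolynomial σ R :=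
  ∑ j, pderiv j (Y j)

def IsLogVectorField (I : Ideal (MvPolynomial σ R)) (Y : σ → MvPolynomial σ R) : Prop :=
  ∀ h ∈ I, ∑ j, Y j * pderiv j h ∈ I

lemma isLogVectorField_of_forall_mem {I : Ideal (MvPolynomial σ R)} {Y : σ → MvPolynomial σ R}
    (hY : ∀ j, Y j ∈ I) : IsLogVectorField I Y :=
  fun _ _ ↦ Ideal.sum_mem _ fun j _ ↦ Ideal.mul_mem_right _ _ (hY j)

lemma divergence_single [DecidableEq σ] (j : σ) (f : MvPolynomial σ R) :
    divergence (Pi.single j f) = pderiv j f := by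
  rw [divergence, Finset.sum_eq_single j (fun k _ hk ↦ by rw [Pi.single_eq_of_ne hk, map_zero])
    (by simp), Pi.single_eq_same]

lemma sum_weight_X_mul_pderiv_mul (w : σ → ℕ) (p q : MvPolynomial σ R) :
    ∑ j, w j • (X j * pderiv j (p * q)) =
      (∑ j, w j • (X j * pderiv j p)) * q + p * ∑ j, w j • (X j * pderiv j q) := by
  simp only [Derivation.leibniz, smul_eq_mul, Finset.sum_mul, Finset.mul_sum,
    ← Finset.sum_add_distrib, nsmul_eq_mul]
  refine Finset.sum_congr rfl fun j _ ↦ ?_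
  ring

lemma divergence_weight_smul_X_mul (w : σ → ℕ) (f : MvPolynomial σ R) :
    divergence (fun j ↦ w j • (X j * f)) = (∑ j, w j) • f + ∑ j, w j • (X j * pderiv j f) := by
  simp only [divergence, map_nsmul, Derivation.leibniz, pderiv_X_self, smul_eq_mul, mul_one,
    Finset.sum_smul, ← Finset.sum_add_distrib, smul_add]
  refine Finset.sum_congr rfl fun j _ ↦ ?_
  ring

lemma divergence_weight_smul_X_mul_mul {w : σ → ℕ} {d δ : ℕ} {p g : MvPolynomial σ R}
    (hp : p.IsWeightedHomogeneous w d) (hg : ∑ j, w j • (X j * pderiv j g) = δ • g) :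
    divergence (fun j ↦ w j • (X j * (p * g))) = (∑ j, w j + d + δ) • (p * g) := by
  rw [divergence_weight_smul_X_mul, sum_weight_X_mul_pderiv_mul, hp.sum_weight_X_mul_pderiv, hg,
    smul_mul_assoc, mul_smul_comm, add_smul, add_smul, add_assoc]

section Derlog

variable {K : Type*} [Field K] (I : Ideal (MvPolynomial σ K))

noncomputable def derlogDivergences : Submodule K (MvPolynomial σ K) :=
  Submodule.span K {F | ∃ Y, IsLogVectorField I Y ∧ divergence Y = F}

variable {I}

lemma divergence_mem_derlogDivergences {Y : σ → MvPolynomial σ K} (hY : IsLogVectorField I Y) :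
    divergence Y ∈ derlogDivergences I :=
  Submodule.subset_span ⟨Y, hY, rfl⟩

lemma pderiv_mem_derlogDivergences {f : MvPolynomial σ K} (hf : f ∈ I) (j : σ) :
    pderiv j f ∈ derlogDivergences I := by
  classical
  rw [← divergence_single]
  refine divergence_mem_derlogDivergences (isLogVectorField_of_forall_mem fun k ↦ ?_)
  rcases eq_or_ne k j with rfl | hk
  · simpa using hf
  · simp [Pi.single_eq_of_ne hk]

variable [CharZero K] {w : σ → ℕ} {δ : ℕ} {g : MvPolynomial σ K}

lemma mul_mem_derlogDivergences_of_isWeightedHomogeneous (hgI : g ∈ I) (hw : 1 ≤ ∑ j, w j)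
    (hg : ∑ j, w j • (X j * pderiv j g) = δ • g) {d : ℕ} {p : MvPolynomial σ K}
    (hp : p.IsWeightedHomogeneous w d) : p * g ∈ derlogDivergences I := by
  have hdiv := divergence_weight_smul_X_mul_mul hp hg
  have hmem : divergence (fun j ↦ w j • (X j * (p * g))) ∈ derlogDivergences I :=
    divergence_mem_derlogDivergences <| isLogVectorField_of_forall_mem fun j ↦
      Submodule.smul_of_tower_mem _ _ (Ideal.mul_mem_left _ _ (Ideal.mul_mem_left _ _ hgI))
  rw [hdiv, ← Nat.cast_smul_eq_nsmul K] at hmem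
  have hc : ((∑ j, w j + d + δ : ℕ) : K) ≠ 0 := Nat.cast_ne_zero.mpr (by omega)
  rw [← inv_smul_smul₀ hc (p * g)]
  exact (derlogDivergences I).smul_mem _ hmem

lemma mul_mem_derlogDivergences (hgI : g ∈ I) (hw : 1 ≤ ∑ j, w j)
    (hg : ∑ j, w j • (X j * pderiv j g) = δ • g) (q : MvPolynomial σ K) :
    q * g ∈ derlogDivergences I := by
  induction q using MvPolynomial.induction_on' with
  | monomial t a =>
    exact mul_mem_derlogDivergences_of_isWeightedHomogeneous hgI hw hg
      (isWeightedHomogeneous_monomial w t a rfl)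
  | add p q hp hq => rw [add_mul]; exact add_mem hp hq

lemma mul_pderiv_mem_derlogDivergences (hgI : g ∈ I) (hw : 1 ≤ ∑ j, w j)
    (hg : ∑ j, w j • (X j * pderiv j g) = δ • g) (p : MvPolynomial σ K) (j : σ) :
    p * pderiv j g ∈ derlogDivergences I := by
  have hsplit : p * pderiv j g = pderiv j (p * g) - pderiv j p * g := by
    rw [Derivation.leibniz, smul_eq_mul, smul_eq_mul]; ring
  rw [hsplit]
  exact sub_mem (pderiv_mem_derlogDivergences (Ideal.mul_mem_left _ _ hgI) j)
    (mul_mem_derlogDivergences hgI hw hg _)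

end Derlog

end MvPolynomial

open MvPolynomial Finset in
/-- Corollary 4.8 (finite-cor), polynomial setting: if the ideal `I` contains elements
`g₁,…,g_s`, each quasihomogeneous for its own system of non-negative weights with positive
total weight, then the codimension of the space `D` of divergences of vector fields in
`Derlog(I)` is at most the codimension of the ideal `J` generated by all partial
derivatives `∂g_i/∂x_j`. -/
theorem wqh_generators_divergence_codim_bound
    (K : Type*) [Field K] [CharZero K] (n s : ℕ)
    (I : Ideal (MvPolynomial (Fin n) K))
    (g : Fin s → MvPolynomial (Fin n) K) (hg : ∀ i, g i ∈ I)
    (w : Fin s → Fin n → ℕ) (hw : ∀ i, 1 ≤ ∑ j, w i j) (δ : Fin s → ℕ)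
    (hqh : ∀ i, ∑ j, (w i j) • (X j * pderiv j (g i)) = (δ i) • g i)
    (D : Submodule K (MvPolynomial (Fin n) K))
    (hD : D = Submodule.span K
      {F : MvPolynomial (Fin n) K |
        ∃ Y : Fin n → MvPolynomial (Fin n) K,
          (∀ h ∈ I, (∑ j, Y j * pderiv j h) ∈ I) ∧ ∑ j, pderiv j (Y j) = F})
    (J : Ideal (MvPolynomial (Fin n) K))
    (hJ : J = Ideal.span {F : MvPolynomial (Fin n) K | ∃ i j, F = pderiv j (g i)}) :
    Module.rank K (MvPolynomial (Fin n) K ⧸ D) ≤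
      Module.rank K (MvPolynomial (Fin n) K ⧸ Submodule.restrictScalars K J) := by
  have hD' : D = derlogDivergences I := hD
  have hJD : J.restrictScalars K ≤ D := by
    rw [hJ, hD']
    refine Ideal.restrictScalars_span_le ?_
    rintro p _ ⟨i, j, rfl⟩
    exact mul_pderiv_mem_derlogDivergences (hg i) (hw i) (hqh i) p j
  exact LinearMap.rank_le_of_surjective _ (Submodule.factor_surjective hJD)
end

section
/- Let K be a field of characteristic zero. In the polynomial ring K[y₁,y₂], let D be the set of all polynomials of the form ∂/∂y₁( (y₂² − y₁³)·g₁ ) + ∂/∂y₂( (y₂² − y₁³)·g₂ ) with g₁, g₂ ∈ K[y₁,y₂]. Then D is a K-subspace of K[y₁,y₂] and K[y₁,y₂] = D ⊕ span_K{1, y₁}; in particular the quotient K[y₁,y₂]/D is 2-dimensional with basis the classes of 1 and of y₁. -/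
/-- The linear map `(g₁, g₂) ↦ ∂/∂y₁((y₂² - y₁³)·g₁) + ∂/∂y₂((y₂² - y₁³)·g₂)` on pairs of
polynomials in `K[y₁,y₂]`, whose range is the space of divergences of vector fields with
components in the ideal of the cuspidal curve. -/
noncomputable def cuspDivMap (K : Type*) [Field K] :
    (MvPolynomial (Fin 2) K × MvPolynomial (Fin 2) K) →ₗ[K] MvPolynomial (Fin 2) K :=
  ((MvPolynomial.pderiv (0 : Fin 2)).toLinearMap ∘ₗ
      LinearMap.mulLeft K ((MvPolynomial.X 1) ^ 2 - (MvPolynomial.X 0) ^ 3) ∘ₗ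
      LinearMap.fst K _ _) +
  ((MvPolynomial.pderiv (1 : Fin 2)).toLinearMap ∘ₗ
      LinearMap.mulLeft K ((MvPolynomial.X 1) ^ 2 - (MvPolynomial.X 0) ^ 3) ∘ₗ
      LinearMap.snd K _ _)

/-!
Write `P = y₂² - y₁³` (with `y₁ = X 0`, `y₂ = X 1`) and `D` for the range of `cuspDivMap`.
Every `∂ᵢ(P g)` has zero coefficients at `1` and `y₁`, because `P g` has no monomial `y₁ᵃ y₂ᵇ`
with `a < 3`, `b < 2`; so `D` meets `span {1, y₁}` trivially.

Conversely, `P` is weighted homogeneous of degree `6` for the weights `(2, 3)`, so by Euler's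
identity the divergence of `P h (2y₁, 3y₂)` is `(n + 11) P h` for `h` of weighted degree `n`, and
`P · K[y] ⊆ D`. The product rule `∂ᵢ(P g) = (∂ᵢP) g + P ∂ᵢg` then puts the Tjurina ideal
`(∂₁P, ∂₂P, P) = (y₁², y₂)` inside `D`, and `K[y] = (y₁², y₂) + span {1, y₁}`.
-/

namespace MvPolynomial

theorem IsWeightedHomogeneous.sum_pderiv_weight_smul_X_mul {R σ : Type*} [CommSemiring R]
    [Fintype σ] {w : σ → ℕ} {φ : MvPolynomial σ R} {n : ℕ}
    (h : φ.IsWeightedHomogeneous w n) :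
    ∑ i, pderiv i (w i • (X i * φ)) = (n + ∑ i, w i) • φ := by
  simp only [map_nsmul, pderiv_mul, pderiv_X_self, one_mul, smul_add, Finset.sum_add_distrib,
    h.sum_weight_X_mul_pderiv, ← Finset.sum_smul, add_smul, add_comm]

theorem coeff_X_pow_mul_eq_zero {R σ : Type*} [CommSemiring R] {i : σ} {n : ℕ}
    {m : σ →₀ ℕ} (hm : m i < n) (p : MvPolynomial σ R) : coeff m (X i ^ n * p) = 0 := by
  rw [X_pow_eq_monomial, coeff_monomial_mul', if_neg (by simpa using hm)]

theorem exists_eq_X_one_mul_add_X_zero_sq_mul_add {R : Type*} [CommSemiring R]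
    (F : MvPolynomial (Fin 2) R) :
    ∃ g h : MvPolynomial (Fin 2) R, ∃ s t : R, F = X 1 * g + X 0 ^ 2 * h + C s + C t * X 0 := by
  induction F using MvPolynomial.induction_on with
  | C a => exact ⟨0, 0, a, 0, by simp⟩
  | add p q hp hq =>
    obtain ⟨g, h, s, t, rfl⟩ := hp
    obtain ⟨g', h', s', t', rfl⟩ := hq
    exact ⟨g + g', h + h', s + s', t + t', by simp only [map_add]; ring⟩
  | mul_X p i hp =>
    obtain ⟨g, h, s, t, rfl⟩ := hp
    match i with
    | 0 => exact ⟨g * X 0, h * X 0 + C t, 0, s, by simp only [map_zero]; ring⟩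
    | 1 => exact ⟨X 1 * g + X 0 ^ 2 * h + C s + C t * X 0, 0, 0, 0, by simp only [map_zero]; ring⟩

end MvPolynomial

section CuspDivergence

open MvPolynomial

variable {K : Type*} [Field K]

local notation "P" => (X 1 ^ 2 - X 0 ^ 3 : MvPolynomial (Fin 2) K)

theorem cuspDivMap_apply (g₁ g₂ : MvPolynomial (Fin 2) K) :
    cuspDivMap K (g₁, g₂) = pderiv 0 (P * g₁) + pderiv 1 (P * g₂) := rfl

theorem coeff_cuspDivMap_eq_zero (g : MvPolynomial (Fin 2) K × MvPolynomial (Fin 2) K)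
    {m : Fin 2 →₀ ℕ} (h₀ : m 0 < 2) (h₁ : m 1 = 0) : coeff m (cuspDivMap K g) = 0 := by
  rw [cuspDivMap_apply, coeff_add, coeff_pderiv, coeff_pderiv, sub_mul, sub_mul, coeff_sub,
    coeff_sub, coeff_X_pow_mul_eq_zero (by simp [h₁]), coeff_X_pow_mul_eq_zero (by simp; omega),
    coeff_X_pow_mul_eq_zero (by simp [h₁]), coeff_X_pow_mul_eq_zero (by simp; omega)]
  ring

theorem eq_zero_of_smul_one_add_smul_X_zero_mem_range_cuspDivMap {s t : K}
    (h : s • 1 + t • X 0 ∈ LinearMap.range (cuspDivMap K)) : s = 0 ∧ t = 0 := by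
  obtain ⟨g, hg⟩ := h
  have h₀ := coeff_cuspDivMap_eq_zero g (m := 0) (by simp) rfl
  have h₁ := coeff_cuspDivMap_eq_zero g (m := Finsupp.single 0 1) (by simp) (by simp)
  rw [hg] at h₀ h₁
  simp only [coeff_add, coeff_smul, coeff_zero_X, coeff_one, coeff_X_same,
    if_neg (Finsupp.single_ne_zero.mpr one_ne_zero).symm, smul_eq_mul] at h₀ h₁
  simpa using And.intro h₀ h₁

theorem disjoint_range_cuspDivMap_span :
    Disjoint (LinearMap.range (cuspDivMap K)) (Submodule.span K {1, X 0}) := by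
  refine Submodule.disjoint_def.mpr fun F hF hFspan => ?_
  obtain ⟨s, t, rfl⟩ := Submodule.mem_span_pair.mp hFspan
  obtain ⟨rfl, rfl⟩ := eq_zero_of_smul_one_add_smul_X_zero_mem_range_cuspDivMap hF
  simp

theorem isWeightedHomogeneous_cusp : IsWeightedHomogeneous ![2, 3] P 6 :=
  ((isWeightedHomogeneous_X K _ 1).pow 2).sub ((isWeightedHomogeneous_X K _ 0).pow 3)

theorem cuspDivMap_euler {h : MvPolynomial (Fin 2) K} {n : ℕ}
    (hh : h.IsWeightedHomogeneous ![2, 3] n) :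
    cuspDivMap K (2 • (X 0 * h), 3 • (X 1 * h)) = (n + 11) • (P * h) := by
  have euler := (isWeightedHomogeneous_cusp.mul hh).sum_pderiv_weight_smul_X_mul
  simp only [Fin.sum_univ_two, Matrix.cons_val_zero, Matrix.cons_val_one] at euler
  rw [cuspDivMap_apply, mul_smul_comm, mul_smul_comm, mul_left_comm _ (X 0),
    mul_left_comm _ (X 1), euler]
  ring_nf

theorem cuspDivMap_fst (g : MvPolynomial (Fin 2) K) :
    cuspDivMap K (g, 0) = P * pderiv 0 g - (3 : K) • (X 0 ^ 2 * g) := by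
  simp only [cuspDivMap_apply, pderiv_mul, pderiv_pow, map_sub, map_zero, pderiv_X_self,
    pderiv_X_of_ne one_ne_zero, pderiv_X_of_ne zero_ne_one, smul_eq_C_mul, map_ofNat]
  ring

theorem cuspDivMap_snd (g : MvPolynomial (Fin 2) K) :
    cuspDivMap K (0, g) = P * pderiv 1 g + (2 : K) • (X 1 * g) := by
  simp only [cuspDivMap_apply, pderiv_mul, pderiv_pow, map_sub, map_zero, pderiv_X_self,
    pderiv_X_of_ne one_ne_zero, pderiv_X_of_ne zero_ne_one, smul_eq_C_mul, map_ofNat]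
  ring

variable [CharZero K]

theorem cusp_mul_mem_range_cuspDivMap (h : MvPolynomial (Fin 2) K) :
    P * h ∈ LinearMap.range (cuspDivMap K) := by
  induction h using MvPolynomial.induction_on' with
  | monomial u a =>
    have hmem := LinearMap.mem_range_self (cuspDivMap K)
      (2 • (X 0 * monomial u a), 3 • (X 1 * monomial u a))
    rw [cuspDivMap_euler (isWeightedHomogeneous_monomial _ u a rfl),
      ← Nat.cast_smul_eq_nsmul K] at hmem
    exact (Submodule.smul_mem_iff _ (by norm_cast)).mp hmem
  | add p q hp hq => rw [mul_add]; exact add_mem hp hq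

theorem X_zero_sq_mul_mem_range_cuspDivMap (g : MvPolynomial (Fin 2) K) :
    X 0 ^ 2 * g ∈ LinearMap.range (cuspDivMap K) := by
  have h : (3 : K) • (X 0 ^ 2 * g) = P * pderiv 0 g - cuspDivMap K (g, 0) := by
    rw [cuspDivMap_fst]; abel
  refine (Submodule.smul_mem_iff _ (three_ne_zero : (3 : K) ≠ 0)).mp ?_
  rw [h]
  exact sub_mem (cusp_mul_mem_range_cuspDivMap _) (LinearMap.mem_range_self _ _)

theorem X_one_mul_mem_range_cuspDivMap (g : MvPolynomial (Fin 2) K) :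
    X 1 * g ∈ LinearMap.range (cuspDivMap K) := by
  have h : (2 : K) • (X 1 * g) = cuspDivMap K (0, g) - P * pderiv 1 g := by
    rw [cuspDivMap_snd]; abel
  refine (Submodule.smul_mem_iff _ (two_ne_zero : (2 : K) ≠ 0)).mp ?_
  rw [h]
  exact sub_mem (LinearMap.mem_range_self _ _) (cusp_mul_mem_range_cuspDivMap _)

theorem range_cuspDivMap_sup_span_eq_top :
    LinearMap.range (cuspDivMap K) ⊔ Submodule.span K {1, X 0} = ⊤ := by
  refine eq_top_iff.mpr fun F _ => ?_
  obtain ⟨g, h, s, t, rfl⟩ := exists_eq_X_one_mul_add_X_zero_sq_mul_add F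
  rw [add_assoc, ← smul_eq_C_mul, ← mul_one (C s), ← smul_eq_C_mul]
  exact Submodule.add_mem_sup
    (add_mem (X_one_mul_mem_range_cuspDivMap g) (X_zero_sq_mul_mem_range_cuspDivMap h))
    (Submodule.mem_span_pair.mpr ⟨s, t, rfl⟩)

end CuspDivergence

open MvPolynomial in
/-- Section 7, the planar cusp: the subspace `D` of `K[y₁,y₂]` of divergences
`∂/∂y₁((y₂² - y₁³)g₁) + ∂/∂y₂((y₂² - y₁³)g₂)` satisfies
`K[y₁,y₂] = D ⊕ span {1, y₁}`; in particular `K[y₁,y₂]/D` is `2`-dimensional with basis the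
classes of `1` and `y₁`. -/
theorem cusp_divergence_complement
    (K : Type*) [Field K] [CharZero K] :
    (∀ F : MvPolynomial (Fin 2) K,
        F ∈ LinearMap.range (cuspDivMap K) ↔
          ∃ g₁ g₂ : MvPolynomial (Fin 2) K,
            F = pderiv (0 : Fin 2) (((X 1) ^ 2 - (X 0) ^ 3) * g₁) +
                pderiv (1 : Fin 2) (((X 1) ^ 2 - (X 0) ^ 3) * g₂)) ∧
    IsCompl (LinearMap.range (cuspDivMap K))
      (Submodule.span K {(1 : MvPolynomial (Fin 2) K), X 0}) ∧
    Module.finrank K (MvPolynomial (Fin 2) K ⧸ LinearMap.range (cuspDivMap K)) = 2 ∧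
    LinearIndependent K
      ![(Submodule.Quotient.mk 1 :
          MvPolynomial (Fin 2) K ⧸ LinearMap.range (cuspDivMap K)),
        Submodule.Quotient.mk (X 0)] ∧
    Submodule.span K
      {(Submodule.Quotient.mk 1 :
          MvPolynomial (Fin 2) K ⧸ LinearMap.range (cuspDivMap K)),
        Submodule.Quotient.mk (X 0)} = ⊤ := by
  have hsup := range_cuspDivMap_sup_span_eq_top (K := K)
  have hli : LinearIndependent K
      ![(Submodule.Quotient.mk 1 : MvPolynomial (Fin 2) K ⧸ LinearMap.range (cuspDivMap K)),
        Submodule.Quotient.mk (X 0)] :=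
    LinearIndependent.pair_iff.mpr fun s t hst =>
      eq_zero_of_smul_one_add_smul_X_zero_mem_range_cuspDivMap <| by
        rwa [← Submodule.Quotient.mk_eq_zero, Submodule.Quotient.mk_add,
          Submodule.Quotient.mk_smul, Submodule.Quotient.mk_smul]
  have hspan : Submodule.span K
      {(Submodule.Quotient.mk 1 : MvPolynomial (Fin 2) K ⧸ LinearMap.range (cuspDivMap K)),
        Submodule.Quotient.mk (X 0)} = ⊤ := by
    rwa [← Submodule.map_mkQ_eq_top, Submodule.map_span, Set.image_pair] at hsup
  refine ⟨fun F => ?_, ⟨disjoint_range_cuspDivMap_span, codisjoint_iff.mpr hsup⟩, ?_, hli,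
    hspan⟩
  · simp [LinearMap.mem_range, cuspDivMap_apply, eq_comm]
  · rw [← finrank_top, ← hspan, ← Matrix.range_cons_cons_empty, finrank_span_eq_card hli,
      Fintype.card_fin]
end
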